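/- Let p ≥ q > 1 (so p − q ≥ 0), let c > 0, η > 0, α > p/(p−q) if p > q (any α > 1 if p = q), and let v : [a,b] → ℝ be C¹, positive on (a,b), v(a)=v(b)=0, v'(a) > 0, v'(b) < 0. Then λ_* := sup_{x∈(a,b)} c^{p−q} v(x)^{α(p−q)−p} [(1−α)(p−1)|v'(x)|^p + η v(x)^p] is finite, i.e. the supremum is < ∞. -/
import Mathlib


open Set

/-- Core finiteness of `λ_*` for one factor: with `p ≥ q > 1`, `c > 0`,
`η > 0`, `α > 1` (and `α > p/(p-q)` when `p > q`), the supremum of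
`c^{p-q} v^{α(p-q)-p} [(1-α)(p-1)|v'|^p + η v^p]` over `(a,b)` is finite. -/
theorem lambda_star_finite
    (a b p q α η c : ℝ) (hab : a < b) (hq : 1 < q) (hpq : q ≤ p)
    (hc : 0 < c) (hη : 0 < η) (hα1 : 1 < α)
    (hα : q < p → p / (p - q) < α)
    (v v' : ℝ → ℝ)
    (hv : ∀ x ∈ Icc a b, HasDerivWithinAt v (v' x) (Icc a b) x)
    (hv'cont : ContinuousOn v' (Icc a b))
    (hvpos : ∀ x ∈ Ioo a b, 0 < v x)
    (hva : v a = 0) (hvb : v b = 0)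
    (hva' : 0 < v' a) (hvb' : v' b < 0) :
    BddAbove ((fun x => c ^ (p - q) * v x ^ (α * (p - q) - p) *
      ((1 - α) * (p - 1) * |v' x| ^ p + η * v x ^ p)) '' Ioo a b) := by
  have hp1 : 1 < p := lt_of_lt_of_le hq hpq
  have hp0 : (0:ℝ) < p := by linarith
  set B : ℝ → ℝ := fun x => (1 - α) * (p - 1) * |v' x| ^ p + η * v x ^ p with hBdef
  have hvcont : ContinuousOn v (Icc a b) := fun x hx => (hv x hx).continuousWithinAt
  have hB : ContinuousOn B (Icc a b) := by
    apply ContinuousOn.add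
    · exact continuousOn_const.mul
        (hv'cont.abs.rpow_const (fun x _ => Or.inr hp0.le))
    · exact continuousOn_const.mul (hvcont.rpow_const (fun x _ => Or.inr hp0.le))
  have hBa : B a < 0 := by
    have h1 : (0:ℝ) < |v' a| ^ p := Real.rpow_pos_of_pos (abs_pos.mpr hva'.ne') p
    have h2 : (0:ℝ) < (α - 1) * (p - 1) * |v' a| ^ p :=
      mul_pos (mul_pos (by linarith) (by linarith)) h1
    simp only [hBdef, hva, Real.zero_rpow hp0.ne']
    nlinarith
  have hBb : B b < 0 := by
    have h1 : (0:ℝ) < |v' b| ^ p := Real.rpow_pos_of_pos (abs_pos.mpr hvb'.ne) p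
    have h2 : (0:ℝ) < (α - 1) * (p - 1) * |v' b| ^ p :=
      mul_pos (mul_pos (by linarith) (by linarith)) h1
    simp only [hBdef, hvb, Real.zero_rpow hp0.ne']
    nlinarith
  set K : Set ℝ := Icc a b ∩ B ⁻¹' (Ici 0) with hKdef
  have hKclosed : IsClosed K := hB.preimage_isClosed_of_isClosed isClosed_Icc isClosed_Ici
  have hKcomp : IsCompact K := isCompact_Icc.of_isClosed_subset hKclosed inter_subset_left
  have hKIoo : K ⊆ Ioo a b := by
    rintro x ⟨hx, hx0⟩
    rcases eq_or_lt_of_le hx.1 with rfl | h1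
    · exact absurd (mem_Ici.mp hx0) (not_le.mpr hBa)
    rcases eq_or_lt_of_le hx.2 with rfl | h2
    · exact absurd (mem_Ici.mp hx0) (not_le.mpr hBb)
    exact ⟨h1, h2⟩
  have hfK : ContinuousOn (fun x => c ^ (p - q) * v x ^ (α * (p - q) - p) * B x) K := by
    refine ContinuousOn.mul (ContinuousOn.mul continuousOn_const ?_)
      (hB.mono inter_subset_left)
    exact (hvcont.mono (hKIoo.trans Ioo_subset_Icc_self)).rpow_const
      (fun x hx => Or.inl (hvpos x (hKIoo hx)).ne')
  obtain ⟨M, hM⟩ := (hKcomp.image_of_continuousOn hfK).bddAbove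
  refine ⟨max M 0, ?_⟩
  rintro y ⟨x, hx, rfl⟩
  show c ^ (p - q) * v x ^ (α * (p - q) - p) * B x ≤ max M 0
  by_cases hBx : 0 ≤ B x
  · exact le_trans (hM ⟨x, ⟨Ioo_subset_Icc_self hx, hBx⟩, rfl⟩) (le_max_left _ _)
  · refine le_trans ?_ (le_max_right _ _)
    have h1 : 0 < c ^ (p - q) := Real.rpow_pos_of_pos hc _
    have h2 : 0 < v x ^ (α * (p - q) - p) := Real.rpow_pos_of_pos (hvpos x hx) _
    exact mul_nonpos_of_nonneg_of_nonpos (mul_pos h1 h2).le (not_le.mp hBx).le
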